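/- Let u be the one-sided fixed point of the Fibonacci substitution S(a)=ab, S(b)=a, and let Ω be the associated subshift, i.e., the set of (one-sided) infinite sequences over {a,b} all of whose finite subwords occur in u. Call a finite subword w of u repeatable if the bi-infinite periodic sequence with unit cell w is a shift of the bi-infinite periodic sequence with unit cell u₀u₁⋯u_{|w|−1}. Then for each ω ∈ Ω there exists a strictly increasing subsequence (F_{k_i}) of the Fibonacci numbers such that each prefix ω₀ω₁⋯ω_{F_{k_i}−1} of ω of length F_{k_i} is a subword of u and is repeatable. -/

import Mathlib

/-- The Fibonacci substitution words `S^k(a)` over the alphabet `{a, b}`, with `a = true`,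
`b = false`: `S^0(a) = a`, `S^1(a) = ab`, `S^{k+2}(a) = S^{k+1}(a) S^k(a)`.
Thus `fibWord (k-1)` is the word `W_k = S^{k-1}(a)`, of length `F_k`. -/
def fibWord : ℕ → List Bool
  | 0 => [true]
  | 1 => [true, false]
  | (k + 2) => fibWord (k + 1) ++ fibWord k

/-- The one-sided infinite fixed point `u = abaababaabaab…` of the Fibonacci substitution;
`fibWord (n + 2)` has length `> n` and all the words `fibWord k` are nested prefixes, so
this gives the `n`-th letter of `u`. -/
def uSeq (n : ℕ) : Bool := (fibWord (n + 2)).getD n true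

/-- `w` is a (finite) subword of `u`, i.e. a block of consecutive letters of `u`. -/
def subwordOfU (w : List Bool) : Prop :=
  ∃ i : ℕ, w = (List.range w.length).map fun j => uSeq (i + j)

/-- The bi-infinite periodic sequence with unit cell `w`. -/
def periodize (w : List Bool) (n : ℤ) : Bool :=
  w.getD (n % (w.length : ℤ)).toNat true

/-- `w` is repeatable: the bi-infinite periodic sequence with unit cell `w` is a shift of
the bi-infinite periodic sequence with unit cell `u₀u₁⋯u_{|w|−1}`. -/
def Repeatable (w : List Bool) : Prop :=
  ∃ s : ℤ, ∀ n : ℤ,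
    periodize w n = periodize ((List.range w.length).map uSeq) (n + s)

open List Nat

/-! Write `P = fibWord (n + 1)` and `Q = fibWord n`, so that `fibWord (n + 2) = P Q`. The
words `P Q` and `Q P` differ only by a swap of their last two letters. Hence every factor of
length `|P|` of `P Q P` is a rotation of `P`, except the single factor `y P⁻` (`y` the last letter
of `Q`, `P⁻` the word `P` without its last letter). Since `fibWord m` starts with `P` for `m > n`,
every factor of `u` of length `|P|` already occurs in `P P` or in `P Q P`. The last letters of the
words `fibWord n` alternate, so the prefix of `ω` of length `|fibWord (n + 1)|` or the one of
length `|fibWord (n + 2)|` is not exceptional, hence a rotation of the corresponding prefix of `u`,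
which makes it repeatable. -/

namespace List

variable {α : Type*}

theorem IsInfix.infix_append_or_infix_of_prefix {v X Y Z : List α} (h : v <:+: X ++ Y)
    (hZ : Z <+: Y) (hv : v.length ≤ Z.length + 1) : v <:+: X ++ Z ∨ v <:+: Y := by
  obtain ⟨s, t, hst⟩ := h
  rw [append_assoc, append_eq_append_iff] at hst
  rcases hst with ⟨a, rfl, hvt⟩ | ⟨c, rfl, rfl⟩
  · rcases eq_nil_or_concat' a with rfl | ⟨a', x, rfl⟩
    · exact Or.inr ⟨[], t, by simpa using hvt⟩
    · have hva : v <+: a' ++ [x] ++ Z :=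
        prefix_of_prefix_length_le ⟨t, hvt⟩ (by simpa using hZ)
          (by simp only [append_assoc, cons_append, nil_append, length_append, length_cons]; omega)
      exact Or.inl (hva.isInfix.trans (by simpa using infix_append s (a' ++ [x] ++ Z) []))
  · exact Or.inr ⟨c, t, by simp⟩

theorem IsInfix.isRotated_of_append_self {v l : List α} (h : v <:+: l ++ l)
    (hv : v.length = l.length) : v ~r l := by
  obtain ⟨s, t, hst⟩ := h
  rw [append_assoc, append_eq_append_iff] at hst
  rcases hst with ⟨a, rfl, hvt⟩ | ⟨c, rfl, hl⟩
  · have hva : v = a ++ s := by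
      rw [← append_assoc] at hvt
      exact (append_inj hvt (by simp only [length_append] at hv ⊢; omega)).1
    rw [hva]; exact isRotated_append
  · rw [IsInfix.eq_of_length ⟨c, t, by simp [hl]⟩ hv]

theorem IsInfix.isRotated_of_append_self_self {v l : List α} (h : v <:+: l ++ l ++ l)
    (hv : v.length = l.length) : v ~r l := by
  rw [append_assoc] at h
  rcases h.infix_append_or_infix_of_prefix (prefix_append l l) (by omega) with h | h <;>
    exact h.isRotated_of_append_self hv

theorem IsInfix.isRotated_or_eq_of_swap {P Q z v : List α} {a b : α}
    (hPQ : P ++ Q = z ++ [a, b]) (hQP : Q ++ P = z ++ [b, a]) (hQ : Q <+: P) (hP : P ≠ [])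
    (h : v <:+: P ++ Q ++ P) (hv : v.length = P.length) : v ~r P ∨ v = b :: P.dropLast := by
  -- `P Q P = P z b a = z a b P`: strip the last two letters one at a time
  have hsplit : P ++ Q ++ P = P ++ z ++ [b] ++ [a] := by simp [append_assoc, hQP]
  have hdrop : P ++ z ++ [b] = z ++ [a] ++ b :: P.dropLast := by
    have := congrArg dropLast hsplit
    rw [dropLast_concat, dropLast_append_of_ne_nil hP, hPQ] at this
    simp [← this]
  have hlen : (b :: P.dropLast).length = P.length := by
    have := length_pos_of_ne_nil hP
    simp only [length_cons, length_dropLast]; omega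
  rw [hsplit, infix_concat_iff, ← hsplit] at h
  rcases h with h | h
  · left
    rw [(suffix_of_suffix_length_le h (suffix_append _ _) hv.le).eq_of_length hv]
  rcases infix_concat_iff.1 h with h | h
  · rw [hdrop] at h
    exact Or.inr ((suffix_of_suffix_length_le h (suffix_append _ _) (by rw [hv, hlen])).eq_of_length
      (by rw [hv, hlen]))
  · have hz : P ++ z <+: P ++ P ++ P := by
      rw [append_assoc, prefix_append_right_inj]
      exact (prefix_append z [a, b]).trans (hPQ ▸ (prefix_append_right_inj P).2 hQ)
    exact Or.inl ((h.trans hz.isInfix).isRotated_of_append_self_self hv)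

end List

theorem fibWord_length : ∀ k, (fibWord k).length = fib (k + 2)
  | 0 => rfl
  | 1 => rfl
  | k + 2 => by
    rw [fibWord, length_append, fibWord_length (k + 1), fibWord_length k, fib_add_two (n := k + 2),
      add_comm]

theorem fibWord_ne_nil (k : ℕ) : fibWord k ≠ [] :=
  ne_nil_of_length_pos (by rw [fibWord_length]; exact fib_pos.2 (by omega))

theorem fibWord_prefix_succ : ∀ k, fibWord k <+: fibWord (k + 1)
  | 0 => ⟨[false], rfl⟩
  | _ + 1 => prefix_append _ _

theorem fibWord_prefix_of_le {k l : ℕ} (h : k ≤ l) : fibWord k <+: fibWord l :=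
  Nat.le_induction (prefix_refl _) (fun l _ ih => ih.trans (fibWord_prefix_succ l)) l h

theorem getElem_fibWord {k n : ℕ} (h : n < (fibWord k).length) : (fibWord k)[n] = uSeq n := by
  have hn : n < (fibWord (n + 2)).length := by
    have := fib_add_two_strictMono.id_le (n + 2)
    rw [fibWord_length]; simp only [id] at this; omega
  rw [uSeq, getD_eq_getElem _ _ hn]
  rcases le_total k (n + 2) with hk | hk
  · exact (fibWord_prefix_of_le hk).getElem h
  · exact ((fibWord_prefix_of_le hk).getElem hn).symm

theorem map_range_uSeq (k : ℕ) : (range (fibWord k).length).map uSeq = fibWord k :=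
  ext_getElem (by simp) fun n _ h => by simp [getElem_fibWord h]

theorem map_range_uSeq_add_infix_fibWord (i L : ℕ) :
    (range L).map (fun j => uSeq (i + j)) <:+: fibWord (i + L) := by
  have hlen : i + L ≤ (fibWord (i + L)).length := by
    have := fib_add_two_strictMono.id_le (i + L)
    rw [fibWord_length]; simpa only [id] using this
  have hwin : (range L).map (fun j => uSeq (i + j)) = ((fibWord (i + L)).drop i).take L :=
    ext_getElem (by simp only [length_map, length_range, length_take, length_drop]; omega)
      fun n h _ => by
        simp only [length_map, length_range] at h
        simp [getElem_fibWord (show i + n < (fibWord (i + L)).length by omega)]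
  rw [hwin]
  exact (take_prefix _ _).isInfix.trans (drop_suffix _ _).isInfix

theorem fibWord_swap_last_two (k : ℕ) :
    ∃ z, fibWord (k + 2) = z ++ [!decide (Even k), decide (Even k)] ∧
    fibWord k ++ fibWord (k + 1) = z ++ [decide (Even k), !decide (Even k)] := by
  induction k with
  | zero => exact ⟨[true], rfl, rfl⟩
  | succ k ih =>
    obtain ⟨z, h₁, h₂⟩ := ih
    refine ⟨fibWord (k + 1) ++ z, ?_, ?_⟩
    · rw [fibWord, fibWord, append_assoc, h₂]
      simp only [Nat.even_add_one, decide_not, Bool.not_not, append_assoc]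
    · rw [show fibWord (k + 1 + 1) = fibWord (k + 2) from rfl, h₁]
      simp only [Nat.even_add_one, decide_not, Bool.not_not, append_assoc]

-- `decide (Even n)` is the last letter of `fibWord n`.
def singularWord (n : ℕ) : List Bool := decide (Even n) :: (fibWord (n + 1)).dropLast

theorem isRotated_or_eq_singularWord_of_infix (n : ℕ) : ∀ (j : ℕ) {v : List Bool},
    v <:+: fibWord (n + 1 + j) ++ fibWord (n + 1) → v.length = (fibWord (n + 1)).length →
    v ~r fibWord (n + 1) ∨ v = singularWord n
  | 0, _, h, hv => Or.inl (h.isRotated_of_append_self hv)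
  | 1, _, h, hv => by
    obtain ⟨z, hPQ, hQP⟩ := fibWord_swap_last_two n
    exact h.isRotated_or_eq_of_swap hPQ hQP (fibWord_prefix_succ n) (fibWord_ne_nil _) hv
  | j + 2, _, h, hv => by
    rw [show n + 1 + (j + 2) = n + 1 + j + 2 from rfl, fibWord, append_assoc] at h
    have hP : fibWord (n + 1) <+: fibWord (n + 1 + j) ++ fibWord (n + 1) :=
      (fibWord_prefix_of_le (by omega)).trans (prefix_append _ _)
    rcases h.infix_append_or_infix_of_prefix hP hv.le.step with h | h
    · exact isRotated_or_eq_singularWord_of_infix n (j + 1) h hv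
    · exact isRotated_or_eq_singularWord_of_infix n j h hv

theorem periodize_rotate (l : List Bool) (r : ℕ) (n : ℤ) :
    periodize (l.rotate r) n = periodize l (n + r) := by
  rcases eq_or_ne l [] with rfl | hl
  · simp [periodize]
  have hpos : (0 : ℤ) < l.length := by exact_mod_cast length_pos_of_ne_nil hl
  have hlt : ∀ m : ℤ, (m % l.length).toNat < l.length := fun m => by
    have := Int.emod_lt_of_pos m hpos; omega
  unfold periodize
  rw [length_rotate, getD_eq_getElem _ _ (by rw [length_rotate]; exact hlt n), getElem_rotate,
    getD_eq_getElem _ _ (hlt _)]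
  congr 1
  zify [Int.toNat_of_nonneg (Int.emod_nonneg _ hpos.ne')]
  exact Int.emod_add_emod n _ r

theorem repeatable_of_isRotated {w : List Bool} (h : w ~r (range w.length).map uSeq) :
    Repeatable w := by
  obtain ⟨r, hr⟩ := h.symm
  exact ⟨r, fun n => by rw [← hr, periodize_rotate, length_rotate]; simp⟩

def PrefixIsRotatedFibWord (ω : ℕ → Bool) (n : ℕ) : Prop :=
  (range (fibWord n).length).map ω ~r fibWord n

theorem prefixIsRotatedFibWord_or_eq_singularWord {ω : ℕ → Bool}
    (hω : ∀ L, subwordOfU ((range L).map ω)) (n : ℕ) :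
    PrefixIsRotatedFibWord ω (n + 1) ∨
      (range (fibWord (n + 1)).length).map ω = singularWord n := by
  obtain ⟨i, hi⟩ := hω (fibWord (n + 1)).length
  simp only [length_map, length_range] at hi
  rw [PrefixIsRotatedFibWord, hi]
  refine isRotated_or_eq_singularWord_of_infix n (i + (fibWord (n + 1)).length) ?_
    (by rw [length_map, length_range])
  exact (map_range_uSeq_add_infix_fibWord _ _).trans
    ((fibWord_prefix_of_le (by omega)).trans (prefix_append _ _)).isInfix

theorem prefixIsRotatedFibWord_succ_or_add_two {ω : ℕ → Bool}
    (hω : ∀ L, subwordOfU ((range L).map ω)) (n : ℕ) :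
    PrefixIsRotatedFibWord ω (n + 1) ∨ PrefixIsRotatedFibWord ω (n + 2) := by
  refine (prefixIsRotatedFibWord_or_eq_singularWord hω n).imp_right fun h₁ => ?_
  refine (prefixIsRotatedFibWord_or_eq_singularWord hω (n + 1)).resolve_right fun h₂ => ?_
  have hpos (k : ℕ) : (fibWord k).length ≠ 0 := (length_pos_of_ne_nil (fibWord_ne_nil k)).ne'
  have e₁ := congrArg head? h₁
  have e₂ := congrArg head? h₂
  simp only [head?_map, head?_range, hpos, if_false, Option.map_some, singularWord, head?_cons,
    Option.some.injEq, Nat.even_add_one, decide_not] at e₁ e₂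
  simp [e₁] at e₂

theorem infinite_setOf_prefixIsRotatedFibWord {ω : ℕ → Bool}
    (hω : ∀ L, subwordOfU ((range L).map ω)) :
    (Set.ofPred (PrefixIsRotatedFibWord ω)).Infinite :=
  Set.infinite_of_forall_exists_gt fun n =>
    (prefixIsRotatedFibWord_succ_or_add_two hω n).elim (⟨_, ·, by omega⟩)
      (⟨_, ·, by omega⟩)

/-- Here `F_k = Nat.fib (k + 1)`. -/
theorem stmt13 (ω : ℕ → Bool)
    (hω : ∀ i L : ℕ, subwordOfU ((List.range L).map fun m => ω (i + m))) :
    ∃ k : ℕ → ℕ, StrictMono k ∧ StrictMono (fun i => Nat.fib (k i + 1)) ∧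
      ∀ i, subwordOfU ((List.range (Nat.fib (k i + 1))).map ω) ∧
        Repeatable ((List.range (Nat.fib (k i + 1))).map ω) := by
  have hpre : ∀ L, subwordOfU ((range L).map ω) := fun L => by simpa using hω 0 L
  have hinf := infinite_setOf_prefixIsRotatedFibWord hpre
  refine ⟨fun i => nth (PrefixIsRotatedFibWord ω) i + 1, (nth_strictMono hinf).add_const 1,
    fib_add_two_strictMono.comp (nth_strictMono hinf), fun i => ⟨hpre _, ?_⟩⟩
  have hrot := nth_mem_of_infinite hinf i
  rw [PrefixIsRotatedFibWord, ← map_range_uSeq] at hrot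
  rw [← fibWord_length]
  exact repeatable_of_isRotated (by simpa using hrot)
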